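/- Let I be a nonzero left ideal of A_n(K) with generators P_1,...,P_m, and let Ĩ be the left ideal of A_n[t] generated by h(P_1),...,h(P_m). Then π(Exp_δ(Ĩ)) = Exp_δ(I), where π: ℕ^{2n+1} → ℕ^{2n} forgets the t-coordinate. The same equality holds with Ĩ replaced by the full homogenised ideal h(I) generated by {h(P) : P ∈ I}. -/

import Mathlib

/-- The index set of normal monomials `x^α D^β` of the Weyl algebra `A_n(K)`. -/
abbrev WMon (n : ℕ) := (Fin n → ℕ) × (Fin n → ℕ)

/-- The normal monomial `x^α D^β`. -/
def wmono {A : Type*} [Ring A] {n : ℕ} (x D : Fin n → A) (ab : WMon n) : A :=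
  (List.ofFn fun i => x i ^ ab.1 i).prod * (List.ofFn fun i => D i ^ ab.2 i).prod

/-- A presentation of the Weyl algebra `A_n(K)`: an associative `K`-algebra `A` with
generators `x_i, D_i` satisfying `[x_i,x_j] = [D_i,D_j] = 0`, `[D_i,x_j] = δ_{ij}`,
such that the normal monomials `x^α D^β` form a `K`-basis. -/
structure WeylData (K : Type*) [Field K] (n : ℕ) (A : Type*) [Ring A] [Algebra K A] where
  x : Fin n → A
  D : Fin n → A
  hxx : ∀ i j, x i * x j = x j * x i
  hDD : ∀ i j, D i * D j = D j * D i
  hDx : ∀ i j, D i * x j = x j * D i + (if i = j then 1 else 0)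
  basis : Module.Basis (WMon n) K A
  basis_eq : ∀ ab, basis ab = wmono x D ab

/-- The Newton diagram of an operator. -/
noncomputable def ND {K : Type*} [Field K] {n : ℕ} {A : Type*} [Ring A] [Algebra K A]
    (W : WeylData K n A) (P : A) : Finset (WMon n) := (W.basis.repr P).support

/-- An order function on the Weyl algebra, with values in `ℤ ∪ {-∞} = WithBot ℤ`. -/
structure IsOrderFunction (K : Type*) [Field K] {A : Type*} [Ring A] [Algebra K A]
    (δ : A → WithBot ℤ) : Prop where
  scalar : ∀ c : K, c ≠ 0 → δ (algebraMap K A c) = 0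
  bot_iff : ∀ P : A, δ P = ⊥ ↔ P = 0
  add_le : ∀ P Q : A, δ (P + Q) ≤ max (δ P) (δ Q)
  mul : ∀ P Q : A, δ (P * Q) = δ P + δ Q

/-- An admissible order function: an order function such that `δ(P)` is the maximum of
`δ(x^α D^β)` over the Newton diagram of `P`. -/
def IsAdmissible {K : Type*} [Field K] {n : ℕ} {A : Type*} [Ring A] [Algebra K A]
    (W : WeylData K n A) (δ : A → WithBot ℤ) : Prop :=
  IsOrderFunction K δ ∧
    ∀ P : A, P ≠ 0 → δ P = (ND W P).sup fun ab => δ (wmono W.x W.D ab)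

/-- A well monomial ordering: an irreflexive, transitive, total relation, compatible with
addition, which is a well-ordering. -/
def WellMonomialOrdering {σ : Type*} [AddCommMonoid σ] (r : σ → σ → Prop) : Prop :=
  (∀ a, ¬ r a a) ∧ (∀ a b c, r a b → r b c → r a c) ∧
    (∀ a b, a ≠ b → r a b ∨ r b a) ∧
    (∀ a b c, r a b → r (a + c) (b + c)) ∧ WellFounded r

/-- The monomial ordering `≺_δ` refining the admissible order function `δ` by a fixed
monomial ordering `r`. -/
def rdelta {K : Type*} [Field K] {n : ℕ} {A : Type*} [Ring A] [Algebra K A]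
    (W : WeylData K n A) (δ : A → WithBot ℤ) (r : WMon n → WMon n → Prop) :
    WMon n → WMon n → Prop := fun a b =>
  δ (wmono W.x W.D a) < δ (wmono W.x W.D b) ∨
    (δ (wmono W.x W.D a) = δ (wmono W.x W.D b) ∧ r a b)

/-- `e` is the maximal element (exponent) of the Newton diagram of `P` w.r.t. `rd`. -/
def IsExp {K : Type*} [Field K] {n : ℕ} {A : Type*} [Ring A] [Algebra K A]
    (W : WeylData K n A) (rd : WMon n → WMon n → Prop) (P : A) (e : WMon n) : Prop :=
  e ∈ ND W P ∧ ∀ f ∈ ND W P, f ≠ e → rd f e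

/-- Index set of monomials `t^k x^α D^β` of the homogenised Weyl algebra. -/
abbrev HMon (n : ℕ) := ℕ × WMon n

/-- A presentation of the homogenised Weyl algebra `A_n[t]`: generators `t, x_i, D_i` with
`t` commuting with the `x_i, D_i`, `[x_i,x_j] = [D_i,D_j] = 0`, `[D_i,x_j] = δ_{ij} t²`,
and the monomials `t^k x^α D^β` forming a `K`-basis. -/
structure HWeylData (K : Type*) [Field K] (n : ℕ) (B : Type*) [Ring B] [Algebra K B] where
  t : B
  x : Fin n → B
  D : Fin n → B
  htx : ∀ i, t * x i = x i * t
  htD : ∀ i, t * D i = D i * t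
  hxx : ∀ i j, x i * x j = x j * x i
  hDD : ∀ i j, D i * D j = D j * D i
  hDx : ∀ i j, D i * x j = x j * D i + (if i = j then t ^ 2 else 0)
  basis : Module.Basis (HMon n) K B
  basis_eq : ∀ v, basis v = t ^ v.1 * wmono x D v.2

/-- Total degree `|α| + |β|` of a monomial of the Weyl algebra. -/
def wdeg {n : ℕ} (ab : WMon n) : ℕ := (∑ i, ab.1 i) + (∑ i, ab.2 i)

/-- The total order `ord^T(P)` of an operator `P`. -/
noncomputable def ordT {K : Type*} [Field K] {n : ℕ} {A : Type*} [Ring A] [Algebra K A]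
    (W : WeylData K n A) (P : A) : ℕ := (ND W P).sup wdeg

/-- The Newton diagram of an element of the homogenised Weyl algebra. -/
noncomputable def NDH {K : Type*} [Field K] {n : ℕ} {B : Type*} [Ring B] [Algebra K B]
    (V : HWeylData K n B) (H : B) : Finset (HMon n) := (V.basis.repr H).support

/-- The homogenisation `h(P) = Σ p_{αβ} t^{ord^T(P)-|α|-|β|} x^α D^β` of an operator. -/
noncomputable def homog {K : Type*} [Field K] {n : ℕ} {A B : Type*} [Ring A] [Algebra K A]
    [Ring B] [Algebra K B] (W : WeylData K n A) (V : HWeylData K n B) (P : A) : B :=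
  ∑ ab ∈ ND W P,
    W.basis.repr P ab • (V.t ^ (ordT W P - wdeg ab) * wmono V.x V.D ab)

/-- The dehomogenisation `H|_{t=1}` of an element of the homogenised Weyl algebra. -/
noncomputable def dehom {K : Type*} [Field K] {n : ℕ} {A B : Type*} [Ring A] [Algebra K A]
    [Ring B] [Algebra K B] (W : WeylData K n A) (V : HWeylData K n B) (H : B) : A :=
  ∑ v ∈ NDH V H, V.basis.repr H v • wmono W.x W.D v.2

/-- `H` is homogeneous of degree `d` in `A_n[t]` (degree of `t^k x^α D^β` is `k+|α|+|β|`). -/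
def IsHomogOfDeg {K : Type*} [Field K] {n : ℕ} {B : Type*} [Ring B] [Algebra K B]
    (V : HWeylData K n B) (H : B) (d : ℕ) : Prop :=
  ∀ v ∈ NDH V H, v.1 + wdeg v.2 = d

/-- Total degree of a monomial of `A_n[t]`. -/
def hdeg {n : ℕ} (v : HMon n) : ℕ := v.1 + wdeg v.2

/-- The well monomial ordering `⊲` on `ℕ^{2n+1}`: compare first by total degree
`k + |α| + |β|`, then by `≺_δ` on `(α,β)`. -/
def rT {K : Type*} [Field K] {n : ℕ} {A : Type*} [Ring A] [Algebra K A]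
    (W : WeylData K n A) (δ : A → WithBot ℤ) (r : WMon n → WMon n → Prop) :
    HMon n → HMon n → Prop := fun a b =>
  hdeg a < hdeg b ∨ (hdeg a = hdeg b ∧ rdelta W δ r a.2 b.2)

/-- `E` is the maximal element of the Newton diagram of `H ∈ A_n[t]` w.r.t. `rd`. -/
def IsExpH {K : Type*} [Field K] {n : ℕ} {B : Type*} [Ring B] [Algebra K B]
    (V : HWeylData K n B) (rd : HMon n → HMon n → Prop) (H : B) (E : HMon n) : Prop :=
  E ∈ NDH V H ∧ ∀ F ∈ NDH V H, F ≠ E → rd F E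

/-- The translated cone `e + ℕ^{2n+1}`. -/
def expCone {n : ℕ} (e : HMon n) : Set (HMon n) := {v | ∃ γ, v = e + γ}


/-!
Setting `t = 1` is a `K`-algebra map `A_n[t] → A_n(K)` sending `h(P)` to `P`. For `H`
homogeneous of degree `d` it identifies the Newton diagram of `H` with that of `H|_{t=1}`
through `(k, α, β) ↦ (α, β)`, with inverse `(α, β) ↦ (d - |α| - |β|, α, β)`; as all these
monomials have total degree `d`, `⊲` compares them by `≺_δ` on `(α, β)`, so the exponent of `H`
projects to that of `H|_{t=1}`. Both `Ĩ` and `h(I)` are generated by homogeneous elements, hence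
contain the homogeneous components of their elements, and the component of `H` carrying its
exponent has the same exponent. Conversely every `Q ∈ I` is `H|_{t=1}` for a homogeneous
`H ∈ Ĩ`: a combination of the `h(P_i)` becomes homogeneous once its summands are multiplied by
suitable powers of `t`.
-/

section PowProd

variable {R : Type*} [Monoid R] {n : ℕ}

def powProd (x : Fin n → R) (α : Fin n → ℕ) : R := (List.ofFn fun i => x i ^ α i).prod

theorem powProd_succ (x : Fin (n + 1) → R) (α : Fin (n + 1) → ℕ) :
    powProd x α = x 0 ^ α 0 * powProd (Fin.tail x) (Fin.tail α) := by
  rw [powProd, List.ofFn_succ, List.prod_cons]; rfl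

@[simp]
theorem powProd_zero (x : Fin n → R) : powProd x 0 = 1 := by
  simp [powProd]

theorem Commute.powProd_right {a : R} {x : Fin n → R} (h : ∀ i, Commute a (x i))
    (α : Fin n → ℕ) : Commute a (powProd x α) :=
  Commute.list_prod_right _ _ fun _ hy => by
    obtain ⟨i, rfl⟩ := List.mem_ofFn.mp hy
    exact (h i).pow_right _

theorem powProd_add_single {x : Fin n → R} (hx : ∀ i j, Commute (x i) (x j))
    (i : Fin n) (α : Fin n → ℕ) : powProd x (α + Pi.single i 1) = x i * powProd x α := by
  induction n with
  | zero => exact i.elim0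
  | succ n ih =>
    rw [powProd_succ, powProd_succ x α]
    induction i using Fin.cases with
    | zero =>
      have htail : Fin.tail (α + Pi.single 0 1) = Fin.tail α := by
        ext j; simp [Fin.tail, Fin.succ_ne_zero]
      simp [htail, pow_succ', mul_assoc]
    | succ i =>
      have htail : Fin.tail (α + Pi.single i.succ 1) = Fin.tail α + Pi.single i 1 := by
        ext j; simp [Fin.tail, Pi.single_apply]
      have hhead : (α + Pi.single i.succ 1 : Fin (n + 1) → ℕ) 0 = α 0 := by
        simp [(Fin.succ_ne_zero i).symm]
      rw [htail, hhead, ih (x := Fin.tail x) (fun i j => hx _ _), ← mul_assoc, Fin.tail,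
        ((hx i.succ 0).pow_right _).eq.symm, mul_assoc]

theorem powProd_mem_graded {S : Type*} [SetLike S R] (G : ℕ → S) [SetLike.GradedMonoid G]
    {x : Fin n → R} (hx : ∀ i, x i ∈ G 1) (α : Fin n → ℕ) : powProd x α ∈ G (∑ i, α i) := by
  rw [← List.sum_ofFn]
  exact SetLike.list_prod_ofFn_mem_graded _ _ fun i => by
    simpa using SetLike.pow_mem_graded (α i) (hx i)

variable {S : Type*} [Monoid S] {f : R → S}

theorem map_pow_mul {y : R} {z : S} (h : ∀ a, f (y * a) = z * f a) (k : ℕ) (a : R) :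
    f (y ^ k * a) = z ^ k * f a := by
  induction k with
  | zero => simp
  | succ k ih => rw [pow_succ', mul_assoc, h, ih, pow_succ', mul_assoc]

theorem map_powProd_mul {y : Fin n → R} {z : Fin n → S} (h : ∀ i a, f (y i * a) = z i * f a)
    (α : Fin n → ℕ) (a : R) : f (powProd y α * a) = powProd z α * f a := by
  induction n with
  | zero => simp [powProd]
  | succ n ih =>
    rw [powProd_succ, powProd_succ z, mul_assoc, map_pow_mul (h 0),
      ih (y := Fin.tail y) (z := Fin.tail z) (fun i => h i.succ), mul_assoc]

end PowProd

section Commutator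

variable {R : Type*} [Ring R] {n : ℕ}

theorem mul_pow_succ_eq_add {D y c : R} (hc : Commute c y) (hD : D * y = y * D + c) (k : ℕ) :
    D * y ^ (k + 1) = y ^ (k + 1) * D + (k + 1) • (c * y ^ k) := by
  induction k with
  | zero => simpa using hD
  | succ k ih =>
    rw [pow_succ, ← mul_assoc, ih, add_mul, mul_assoc, hD, smul_mul_assoc, mul_add,
      ← mul_assoc, ← pow_succ, ((hc.pow_right _).eq).symm, mul_assoc, ← pow_succ]
    simp only [add_smul, one_smul]
    abel

theorem mul_pow_eq_add {D y c : R} (hc : Commute c y) (hD : D * y = y * D + c) (k : ℕ) :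
    D * y ^ k = y ^ k * D + k • (c * y ^ (k - 1)) := by
  cases k with
  | zero => simp
  | succ k => simpa using mul_pow_succ_eq_add hc hD k

-- `α - Pi.single i 1` truncates when `α i = 0`, harmlessly: its coefficient is then `0`.
theorem mul_powProd_eq_add {x : Fin n → R} {D c : R} (hc : ∀ j, Commute c (x j)) (i : Fin n)
    (hD : ∀ j, D * x j = x j * D + if i = j then c else 0) (α : Fin n → ℕ) :
    D * powProd x α = powProd x α * D + α i • (c * powProd x (α - Pi.single i 1)) := by
  induction n with
  | zero => exact i.elim0
  | succ n ih =>
    rw [powProd_succ, powProd_succ x]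
    induction i using Fin.cases with
    | zero =>
      have hrest : Commute D (powProd (Fin.tail x) (Fin.tail α)) :=
        Commute.powProd_right (fun j => by
          simpa [Commute, SemiconjBy, Fin.tail, (Fin.succ_ne_zero j).symm] using hD j.succ) _
      have htail : Fin.tail (α - Pi.single 0 1) = Fin.tail α := by
        ext j; simp [Fin.tail, Fin.succ_ne_zero]
      rw [← mul_assoc, mul_pow_eq_add (hc 0) (by simpa using hD 0), htail, add_mul,
        mul_assoc, hrest.eq, smul_mul_assoc]
      simp [mul_assoc]
    | succ i =>
      have hhead : Commute D (x 0 ^ α 0) :=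
        Commute.pow_right (by simpa [Commute, SemiconjBy, Fin.succ_ne_zero i] using hD 0) _
      have htail : Fin.tail (α - Pi.single i.succ 1) = Fin.tail α - Pi.single i 1 := by
        ext j; simp [Fin.tail, Pi.single_apply]
      have hhead' : (α - Pi.single i.succ 1 : Fin (n + 1) → ℕ) 0 = α 0 := by
        simp [(Fin.succ_ne_zero i).symm]
      rw [← mul_assoc, hhead.eq, mul_assoc,
        ih (x := Fin.tail x) (fun j => hc _) i (fun j => by simpa [Fin.tail] using hD j.succ),
        htail, hhead', mul_add, mul_smul_comm, ← mul_assoc (x 0 ^ α 0) c,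
        ((hc 0).pow_right _).eq.symm]
      simp only [mul_assoc]
      rfl

theorem wmono_eq_powProd (x D : Fin n → R) (ab : WMon n) :
    wmono x D ab = powProd x ab.1 * powProd D ab.2 := rfl

@[simp]
theorem wmono_zero (x D : Fin n → R) : wmono x D 0 = 1 := by
  simp [wmono_eq_powProd]

end Commutator

/-- The relations shared by `A_n(K)` (with `c = 1`) and `A_n[t]` (with `c = t²`). -/
structure WeylRelations {R : Type*} [Ring R] {n : ℕ} (x D : Fin n → R) (c : R) : Prop where
  x_comm : ∀ i j, Commute (x i) (x j)
  D_comm : ∀ i j, Commute (D i) (D j)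
  D_mul_x : ∀ i j, D i * x j = x j * D i + if i = j then c else 0
  c_comm : ∀ j, Commute c (x j)

namespace WeylRelations

variable {R : Type*} [Ring R] {n : ℕ} {x D : Fin n → R} {c : R}

theorem x_mul_wmono (h : WeylRelations x D c) (i : Fin n) (α β : Fin n → ℕ) :
    x i * wmono x D (α, β) = wmono x D (α + Pi.single i 1, β) := by
  rw [wmono_eq_powProd, wmono_eq_powProd, powProd_add_single h.x_comm, mul_assoc]

theorem D_mul_wmono (h : WeylRelations x D c) (i : Fin n) (α β : Fin n → ℕ) :
    D i * wmono x D (α, β) =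
      wmono x D (α, β + Pi.single i 1) + α i • (c * wmono x D (α - Pi.single i 1, β)) := by
  simp only [wmono_eq_powProd]
  rw [← mul_assoc, mul_powProd_eq_add h.c_comm i (h.D_mul_x i), add_mul, mul_assoc,
    ← powProd_add_single h.D_comm, smul_mul_assoc, mul_assoc]

end WeylRelations

namespace WeylData

variable {K : Type*} [Field K] {n : ℕ} {A : Type*} [Ring A] [Algebra K A]
  (W : WeylData K n A)

theorem weylRelations : WeylRelations W.x W.D 1 :=
  ⟨W.hxx, W.hDD, W.hDx, fun _ => Commute.one_left _⟩

theorem basis_zero : W.basis 0 = 1 := by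
  simp [W.basis_eq]

theorem x_mul_basis (i : Fin n) (α β : Fin n → ℕ) :
    W.x i * W.basis (α, β) = W.basis (α + Pi.single i 1, β) := by
  rw [W.basis_eq, W.basis_eq, W.weylRelations.x_mul_wmono]

theorem D_mul_basis (i : Fin n) (α β : Fin n → ℕ) :
    W.D i * W.basis (α, β) =
      W.basis (α, β + Pi.single i 1) + α i • W.basis (α - Pi.single i 1, β) := by
  rw [W.basis_eq, W.basis_eq, W.basis_eq, W.weylRelations.D_mul_wmono, one_mul]

end WeylData

namespace HWeylData

variable {K : Type*} [Field K] {n : ℕ} {B : Type*} [Ring B] [Algebra K B]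
  (V : HWeylData K n B)

theorem weylRelations : WeylRelations V.x V.D (V.t ^ 2) :=
  ⟨V.hxx, V.hDD, V.hDx, fun j => Commute.pow_left (V.htx j) 2⟩

theorem basis_zero : V.basis 0 = 1 := by
  simp [V.basis_eq]

theorem t_mul_basis (v : HMon n) : V.t * V.basis v = V.basis (v.1 + 1, v.2) := by
  rw [V.basis_eq, V.basis_eq, ← mul_assoc, ← pow_succ']

theorem x_mul_basis (i : Fin n) (k : ℕ) (α β : Fin n → ℕ) :
    V.x i * V.basis (k, α, β) = V.basis (k, α + Pi.single i 1, β) := by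
  rw [V.basis_eq, V.basis_eq, ← mul_assoc, (Commute.pow_left (V.htx i) k).eq.symm, mul_assoc,
    V.weylRelations.x_mul_wmono]

theorem D_mul_basis (i : Fin n) (k : ℕ) (α β : Fin n → ℕ) :
    V.D i * V.basis (k, α, β) =
      V.basis (k, α, β + Pi.single i 1) + α i • V.basis (k + 2, α - Pi.single i 1, β) := by
  rw [V.basis_eq, V.basis_eq, V.basis_eq, ← mul_assoc, (Commute.pow_left (V.htD i) k).eq.symm,
    mul_assoc, V.weylRelations.D_mul_wmono, mul_add, mul_smul_comm, pow_add, mul_assoc]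

end HWeylData

section Dehom

variable {K : Type*} [Field K] {n : ℕ} {A B : Type*} [Ring A] [Algebra K A] [Ring B]
  [Algebra K B] (W : WeylData K n A) (V : HWeylData K n B)

theorem dehom_eq_constr : dehom W V = V.basis.constr K fun v => W.basis v.2 := by
  funext H
  simp [dehom, NDH, Module.Basis.constr_apply, Finsupp.sum, W.basis_eq]

noncomputable def dehomₗ : B →ₗ[K] A :=
  (V.basis.constr K fun v => W.basis v.2).copy (dehom W V) (dehom_eq_constr W V)

theorem dehomₗ_basis (v : HMon n) : dehomₗ W V (V.basis v) = W.basis v.2 := by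
  change dehom W V _ = _
  rw [dehom_eq_constr, Module.Basis.constr_basis]

theorem dehomₗ_t_mul (H : B) : dehomₗ W V (V.t * H) = dehomₗ W V H :=
  LinearMap.congr_fun (V.basis.ext (f₁ := dehomₗ W V ∘ₗ LinearMap.mulLeft K V.t)
    (f₂ := dehomₗ W V) fun v => by simp [V.t_mul_basis, dehomₗ_basis]) H

theorem dehomₗ_x_mul (i : Fin n) (H : B) :
    dehomₗ W V (V.x i * H) = W.x i * dehomₗ W V H :=
  LinearMap.congr_fun (V.basis.ext (f₁ := dehomₗ W V ∘ₗ LinearMap.mulLeft K (V.x i))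
    (f₂ := LinearMap.mulLeft K (W.x i) ∘ₗ dehomₗ W V) fun ⟨k, α, β⟩ => by
      simp [V.x_mul_basis, W.x_mul_basis, dehomₗ_basis]) H

theorem dehomₗ_D_mul (i : Fin n) (H : B) :
    dehomₗ W V (V.D i * H) = W.D i * dehomₗ W V H :=
  LinearMap.congr_fun (V.basis.ext (f₁ := dehomₗ W V ∘ₗ LinearMap.mulLeft K (V.D i))
    (f₂ := LinearMap.mulLeft K (W.D i) ∘ₗ dehomₗ W V) fun ⟨k, α, β⟩ => by
      simp only [LinearMap.comp_apply, LinearMap.mulLeft_apply, V.D_mul_basis, W.D_mul_basis,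
        map_add, map_nsmul, dehomₗ_basis]) H

theorem dehomₗ_basis_mul (u : HMon n) (H : B) :
    dehomₗ W V (V.basis u * H) = W.basis u.2 * dehomₗ W V H := by
  obtain ⟨k, α, β⟩ := u
  rw [V.basis_eq, W.basis_eq, wmono_eq_powProd, wmono_eq_powProd, mul_assoc, mul_assoc,
    map_pow_mul (f := dehomₗ W V) (z := 1) (by simpa using dehomₗ_t_mul W V),
    map_powProd_mul (dehomₗ_x_mul W V), map_powProd_mul (dehomₗ_D_mul W V), one_pow, one_mul,
    mul_assoc]

theorem dehomₗ_mul (G H : B) : dehomₗ W V (G * H) = dehomₗ W V G * dehomₗ W V H :=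
  LinearMap.congr_fun (V.basis.ext (f₁ := dehomₗ W V ∘ₗ LinearMap.mulRight K H)
    (f₂ := LinearMap.mulRight K (dehomₗ W V H) ∘ₗ dehomₗ W V) fun u => by
      simp [dehomₗ_basis_mul, dehomₗ_basis]) G

noncomputable def dehomAlgHom : B →ₐ[K] A :=
  AlgHom.ofLinearMap (dehomₗ W V)
    (by rw [← V.basis_zero, dehomₗ_basis, Prod.snd_zero, W.basis_zero]) (dehomₗ_mul W V)

theorem dehomAlgHom_t : dehomAlgHom W V V.t = 1 := by
  have := (dehomₗ_t_mul W V 1).trans (map_one (dehomAlgHom W V))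
  rwa [mul_one] at this

theorem homog_eq_sum (P : A) :
    homog W V P = ∑ ab ∈ ND W P, W.basis.repr P ab • V.basis (ordT W P - wdeg ab, ab) :=
  Finset.sum_congr rfl fun ab _ => by rw [V.basis_eq]

theorem dehomAlgHom_homog (P : A) : dehomAlgHom W V (homog W V P) = P := by
  conv_rhs => rw [← W.basis.linearCombination_repr P]
  simp [homog_eq_sum, dehomAlgHom, dehomₗ_basis, Finsupp.linearCombination_apply,
    Finsupp.sum, ND]

end Dehom

section MultiIndex

variable {ι : Type*} [Fintype ι] [DecidableEq ι]

theorem sum_add_single_one (α : ι → ℕ) (i : ι) :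
    ∑ j, (α + Pi.single i 1 : ι → ℕ) j = ∑ j, α j + 1 := by
  simp [Finset.sum_add_distrib]

theorem sum_sub_single_one {α : ι → ℕ} {i : ι} (h : α i ≠ 0) :
    ∑ j, (α - Pi.single i 1 : ι → ℕ) j = ∑ j, α j - 1 := by
  rw [Pi.sub_def, Finset.sum_tsub_distrib]
  · simp
  · intro j _
    rcases eq_or_ne j i with rfl | hj
    · simpa [Nat.one_le_iff_ne_zero]
    · simp [hj]

end MultiIndex

namespace HWeylData

variable {K : Type*} [Field K] {n : ℕ} {B : Type*} [Ring B] [Algebra K B]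
  (V : HWeylData K n B)

def gradedPiece (d : ℕ) : Submodule K B := Submodule.span K (V.basis '' {v | hdeg v = d})

variable {V}

theorem mem_gradedPiece_iff {H : B} {d : ℕ} : H ∈ V.gradedPiece d ↔ IsHomogOfDeg V H d :=
  V.basis.mem_span_image

theorem eq_of_mem_NDH {H : B} {d : ℕ} (hH : H ∈ V.gradedPiece d) {v : HMon n}
    (hv : v ∈ NDH V H) : v = (d - wdeg v.2, v.2) := by
  have := mem_gradedPiece_iff.mp hH v hv
  ext <;> simp; omega

theorem basis_mem_gradedPiece (v : HMon n) : V.basis v ∈ V.gradedPiece (hdeg v) :=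
  Submodule.subset_span ⟨v, rfl, rfl⟩

variable (V)

def degRaising (e : ℕ) : Submodule K B where
  carrier := {g | ∀ d, ∀ H ∈ V.gradedPiece d, g * H ∈ V.gradedPiece (e + d)}
  add_mem' hg hg' d H hH := by rw [add_mul]; exact add_mem (hg d H hH) (hg' d H hH)
  zero_mem' d H _ := by rw [zero_mul]; exact zero_mem _
  smul_mem' c g hg d H hH := by rw [smul_mul_assoc]; exact Submodule.smul_mem _ c (hg d H hH)

instance : SetLike.GradedMonoid V.degRaising where
  one_mem d H hH := by simpa using hH
  mul_mem e f g g' hg hg' d H hH := by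
    rw [mul_assoc, add_assoc]; exact hg _ _ (hg' d H hH)

variable {V}

theorem mem_degRaising_of_basis {g : B} {e : ℕ}
    (h : ∀ v, g * V.basis v ∈ V.gradedPiece (e + hdeg v)) : g ∈ V.degRaising e := by
  intro d H hH
  induction hH using Submodule.span_induction with
  | mem _ hx => obtain ⟨v, rfl, rfl⟩ := hx; exact h v
  | zero => rw [mul_zero]; exact zero_mem _
  | add _ _ _ _ hx hy => rw [mul_add]; exact add_mem hx hy
  | smul c _ _ hx => rw [mul_smul_comm]; exact Submodule.smul_mem _ c hx

variable (V)

theorem t_mem_degRaising : V.t ∈ V.degRaising 1 :=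
  mem_degRaising_of_basis fun v => by
    rw [t_mul_basis]
    convert basis_mem_gradedPiece _ using 2
    simp only [hdeg]; omega

theorem x_mem_degRaising (i : Fin n) : V.x i ∈ V.degRaising 1 :=
  mem_degRaising_of_basis fun ⟨k, α, β⟩ => by
    rw [x_mul_basis]
    convert basis_mem_gradedPiece _ using 2
    simp only [hdeg, wdeg, sum_add_single_one]; omega

theorem D_mem_degRaising (i : Fin n) : V.D i ∈ V.degRaising 1 :=
  mem_degRaising_of_basis fun ⟨k, α, β⟩ => by
    rw [D_mul_basis]
    refine add_mem ?_ ?_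
    · convert basis_mem_gradedPiece _ using 2
      simp only [hdeg, wdeg, sum_add_single_one]; omega
    · rcases eq_or_ne (α i) 0 with h | h
      · rw [h, zero_smul]; exact zero_mem _
      · refine nsmul_mem ?_ _
        have : 1 ≤ ∑ j, α j := (Nat.one_le_iff_ne_zero.mpr h).trans
          (Finset.single_le_sum (fun j _ => Nat.zero_le (α j)) (Finset.mem_univ i))
        convert basis_mem_gradedPiece _ using 2
        simp only [hdeg, wdeg, sum_sub_single_one h]; omega

theorem basis_mem_degRaising (v : HMon n) : V.basis v ∈ V.degRaising (hdeg v) := by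
  obtain ⟨k, α, β⟩ := v
  rw [V.basis_eq, wmono_eq_powProd]
  have := SetLike.mul_mem_graded (SetLike.pow_mem_graded k V.t_mem_degRaising)
    (SetLike.mul_mem_graded (powProd_mem_graded _ V.x_mem_degRaising α)
      (powProd_mem_graded _ V.D_mem_degRaising β))
  simpa [hdeg, wdeg] using this

theorem gradedPiece_le_degRaising (d : ℕ) : V.gradedPiece d ≤ V.degRaising d :=
  Submodule.span_le.mpr <| by rintro _ ⟨v, rfl, rfl⟩; exact V.basis_mem_degRaising v

variable {V}

theorem mul_mem_gradedPiece {G H : B} {e d : ℕ} (hG : G ∈ V.gradedPiece e)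
    (hH : H ∈ V.gradedPiece d) : G * H ∈ V.gradedPiece (e + d) :=
  V.gradedPiece_le_degRaising e hG d H hH

theorem tpow_mul_mem_gradedPiece {H : B} {d : ℕ} (hH : H ∈ V.gradedPiece d) (k : ℕ) :
    V.t ^ k * H ∈ V.gradedPiece (k + d) := by
  simpa using SetLike.pow_mem_graded k V.t_mem_degRaising d H hH

end HWeylData

theorem Module.Basis.apply_mem_of_forall {ι R M N : Type*} [Semiring R] [AddCommMonoid M]
    [Module R M] [AddCommMonoid N] [Module R N] (b : Module.Basis ι R M) (f : M →ₗ[R] N)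
    {p : Submodule R N} (h : ∀ i, f (b i) ∈ p) (x : M) : f x ∈ p :=
  (Submodule.span_le (p := p.comap f)).mpr (Set.range_subset_iff.mpr h) (b.mem_span x)

namespace HWeylData

variable {K : Type*} [Field K] {n : ℕ} {B : Type*} [Ring B] [Algebra K B]
  (V : HWeylData K n B)

open Classical in
noncomputable def homogComponent (d : ℕ) : B →ₗ[K] B :=
  V.basis.repr.symm.toLinearMap ∘ₗ (Finsupp.supported K K {v | hdeg v = d}).subtype ∘ₗ
    Finsupp.restrictDom K K {v | hdeg v = d} ∘ₗ V.basis.repr.toLinearMap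

variable {V}

theorem repr_homogComponent (d : ℕ) (H : B) (v : HMon n) :
    V.basis.repr (V.homogComponent d H) v = if hdeg v = d then V.basis.repr H v else 0 := by
  simp [homogComponent, Finsupp.restrictDom_apply, Finsupp.filter_apply]

theorem mem_NDH_homogComponent {d : ℕ} {H : B} {v : HMon n} :
    v ∈ NDH V (V.homogComponent d H) ↔ v ∈ NDH V H ∧ hdeg v = d := by
  simp [NDH, repr_homogComponent, and_comm]

theorem homogComponent_mem_gradedPiece (d : ℕ) (H : B) :
    V.homogComponent d H ∈ V.gradedPiece d :=
  mem_gradedPiece_iff.mpr fun _ hv => (mem_NDH_homogComponent.mp hv).2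

theorem homogComponent_of_mem {H : B} {e : ℕ} (hH : H ∈ V.gradedPiece e) (d : ℕ) :
    V.homogComponent d H = if e = d then H else 0 := by
  apply V.basis.repr.injective
  ext v
  rw [repr_homogComponent]
  rcases eq_or_ne (V.basis.repr H v) 0 with hv | hv
  · split_ifs <;> simp [hv]
  · obtain rfl : hdeg v = e := mem_gradedPiece_iff.mp hH v (Finsupp.mem_support_iff.mpr hv)
    split_ifs <;> simp_all

theorem homogComponent_mul_mem_span_singleton {s : B} {e : ℕ} (hs : s ∈ V.gradedPiece e)
    (d : ℕ) (g : B) : V.homogComponent d (g * s) ∈ Ideal.span {s} :=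
  V.basis.apply_mem_of_forall (V.homogComponent d ∘ₗ LinearMap.mulRight K s)
    (p := (Ideal.span {s}).restrictScalars K) (fun u => by
      simp only [LinearMap.comp_apply, LinearMap.mulRight_apply, Submodule.restrictScalars_mem,
        homogComponent_of_mem (mul_mem_gradedPiece (V.basis_mem_gradedPiece u) hs)]
      split_ifs
      · exact Ideal.mul_mem_left _ _ (Ideal.mem_span_singleton_self s)
      · exact zero_mem _) g

theorem homogComponent_mem_span {T : Set B}
    (hT : ∀ s ∈ T, SetLike.IsHomogeneousElem V.gradedPiece s) {H : B}
    (hH : H ∈ Ideal.span T) (d : ℕ) : V.homogComponent d H ∈ Ideal.span T := by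
  obtain ⟨c, hc, rfl⟩ := Submodule.mem_span_set.mp hH
  rw [Finsupp.sum, map_sum]
  refine Submodule.sum_mem _ fun s hs => ?_
  obtain ⟨e, he⟩ := hT s (hc hs)
  exact Ideal.span_mono (Set.singleton_subset_iff.mpr (hc hs))
    (homogComponent_mul_mem_span_singleton he d (c s))

theorem _root_.IsExpH.homogComponent {rd : HMon n → HMon n → Prop} {H : B} {E : HMon n}
    (hE : IsExpH V rd H E) : IsExpH V rd (V.homogComponent (hdeg E) H) E :=
  ⟨mem_NDH_homogComponent.mpr ⟨hE.1, rfl⟩,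
    fun F hF hne => hE.2 F (mem_NDH_homogComponent.mp hF).1 hne⟩

end HWeylData

section Lift

variable {K : Type*} [Field K] {n : ℕ} {A B : Type*} [Ring A] [Algebra K A] [Ring B]
  [Algebra K B] (W : WeylData K n A) (V : HWeylData K n B)

theorem homog_mem_gradedPiece (P : A) : homog W V P ∈ V.gradedPiece (ordT W P) := by
  rw [homog_eq_sum]
  refine Submodule.sum_mem _ fun ab hab => Submodule.smul_mem _ _ ?_
  convert HWeylData.basis_mem_gradedPiece _ using 2
  exact (Nat.sub_add_cancel (Finset.le_sup hab : wdeg ab ≤ ordT W P)).symm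

theorem exists_homogeneous_lift {ι : Type*} (P : ι → A) {Q : A}
    (hQ : Q ∈ Ideal.span (Set.range P)) :
    ∃ H ∈ Ideal.span (Set.range fun i => homog W V (P i)),
      SetLike.IsHomogeneousElem V.gradedPiece H ∧ dehomAlgHom W V H = Q := by
  induction hQ using Submodule.span_induction with
  | mem _ hx =>
    obtain ⟨i, rfl⟩ := hx
    exact ⟨_, Ideal.subset_span ⟨i, rfl⟩, ⟨_, homog_mem_gradedPiece W V _⟩,
      dehomAlgHom_homog W V _⟩
  | zero => exact ⟨0, zero_mem _, ⟨0, zero_mem _⟩, map_zero _⟩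
  | add _ _ _ _ h₁ h₂ =>
    obtain ⟨H₁, hJ₁, ⟨d₁, hd₁⟩, rfl⟩ := h₁
    obtain ⟨H₂, hJ₂, ⟨d₂, hd₂⟩, rfl⟩ := h₂
    refine ⟨V.t ^ d₂ * H₁ + V.t ^ d₁ * H₂,
      add_mem (Ideal.mul_mem_left _ _ hJ₁) (Ideal.mul_mem_left _ _ hJ₂),
      ⟨d₂ + d₁, add_mem (HWeylData.tpow_mul_mem_gradedPiece hd₁ d₂) ?_⟩,
      by simp [dehomAlgHom_t]⟩
    rw [add_comm]
    exact HWeylData.tpow_mul_mem_gradedPiece hd₂ d₁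
  | smul c _ _ h =>
    obtain ⟨H, hJ, ⟨d, hd⟩, rfl⟩ := h
    exact ⟨homog W V c * H, Ideal.mul_mem_left _ _ hJ,
      ⟨_, HWeylData.mul_mem_gradedPiece (homog_mem_gradedPiece W V c) hd⟩,
      by rw [map_mul, dehomAlgHom_homog, smul_eq_mul]⟩

end Lift

section Exponents

variable {K : Type*} [Field K] {n : ℕ} {A B : Type*} [Ring A] [Algebra K A] [Ring B]
  [Algebra K B] (W : WeylData K n A) {V : HWeylData K n B} {d : ℕ} {H : B}

theorem repr_dehomAlgHom_of_mem (hH : H ∈ V.gradedPiece d) (ab : WMon n) :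
    W.basis.repr (dehomAlgHom W V H) ab = V.basis.repr H (d - wdeg ab, ab) := by
  induction hH using Submodule.span_induction with
  | mem _ hx =>
    obtain ⟨v, hv, rfl⟩ := hx
    simp only [dehomAlgHom, AlgHom.ofLinearMap_apply, dehomₗ_basis, Module.Basis.repr_self,
      Finsupp.single_apply]
    congr 1
    simp only [Set.mem_ofPred_eq, hdeg] at hv
    refine propext ⟨?_, fun h => h ▸ rfl⟩
    rintro rfl
    ext <;> simp; omega
  | zero => simp
  | add _ _ _ _ hx hy => simp [hx, hy]
  | smul c _ _ hx => simp [hx]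

theorem mem_ND_dehomAlgHom_iff (hH : H ∈ V.gradedPiece d) (ab : WMon n) :
    ab ∈ ND W (dehomAlgHom W V H) ↔ (d - wdeg ab, ab) ∈ NDH V H := by
  simp [ND, NDH, repr_dehomAlgHom_of_mem W hH]

theorem IsExp.ne_zero {rd : WMon n → WMon n → Prop} {Q : A} {e : WMon n}
    (he : IsExp W rd Q e) : Q ≠ 0 := by
  rintro rfl
  simpa [ND] using he.1

variable (δ : A → WithBot ℤ) (r : WMon n → WMon n → Prop)

theorem IsExpH.isExp_dehomAlgHom (hH : H ∈ V.gradedPiece d) {E : HMon n}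
    (hE : IsExpH V (rT W δ r) H E) : IsExp W (rdelta W δ r) (dehomAlgHom W V H) E.2 := by
  have hEd := HWeylData.mem_gradedPiece_iff.mp hH E hE.1
  refine ⟨(mem_ND_dehomAlgHom_iff W hH _).mpr (HWeylData.eq_of_mem_NDH hH hE.1 ▸ hE.1),
    fun f hf hne => ?_⟩
  have hF := (mem_ND_dehomAlgHom_iff W hH f).mp hf
  rcases hE.2 _ hF (fun h => hne (congrArg Prod.snd h)) with hlt | ⟨-, hrd⟩
  · have := HWeylData.mem_gradedPiece_iff.mp hH _ hF
    simp only [hdeg] at hlt; omega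
  · exact hrd

theorem IsExp.isExpH_of_dehomAlgHom (hH : H ∈ V.gradedPiece d) {e : WMon n}
    (he : IsExp W (rdelta W δ r) (dehomAlgHom W V H) e) :
    IsExpH V (rT W δ r) H (d - wdeg e, e) := by
  refine ⟨(mem_ND_dehomAlgHom_iff W hH e).mp he.1, fun F hF hne => ?_⟩
  have hF2 : F.2 ∈ ND W (dehomAlgHom W V H) :=
    (mem_ND_dehomAlgHom_iff W hH _).mpr (HWeylData.eq_of_mem_NDH hH hF ▸ hF)
  refine Or.inr ⟨?_, he.2 _ hF2 fun h => hne (by rw [HWeylData.eq_of_mem_NDH hH hF, h])⟩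
  have h₁ := HWeylData.mem_gradedPiece_iff.mp hH _ hF
  have h₂ := HWeylData.mem_gradedPiece_iff.mp hH _ ((mem_ND_dehomAlgHom_iff W hH e).mp he.1)
  simp only [hdeg] at *; omega

end Exponents

section ExpSets

variable {K : Type*} [Field K] {n : ℕ} {A B : Type*} [Ring A] [Algebra K A] [Ring B]
  [Algebra K B]

def expSet (W : WeylData K n A) (rd : WMon n → WMon n → Prop) (I : Ideal A) : Set (WMon n) :=
  {v | ∃ Q ∈ I, Q ≠ 0 ∧ IsExp W rd Q v}

def projExpSet (V : HWeylData K n B) (rd : HMon n → HMon n → Prop) (J : Ideal B) :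
    Set (WMon n) :=
  {v | ∃ E : HMon n, v = E.2 ∧ ∃ H ∈ J, H ≠ 0 ∧ IsExpH V rd H E}

variable (W : WeylData K n A) (V : HWeylData K n B) (δ : A → WithBot ℤ)
  (r : WMon n → WMon n → Prop) {I : Ideal A}

theorem projExpSet_span_subset {T : Set B}
    (hT : ∀ s ∈ T, SetLike.IsHomogeneousElem V.gradedPiece s)
    (hTI : ∀ s ∈ T, dehomAlgHom W V s ∈ I) :
    projExpSet V (rT W δ r) (Ideal.span T) ⊆ expSet W (rdelta W δ r) I := by
  rintro _ ⟨E, rfl, H, hH, -, hE⟩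
  have hexp :=
    hE.homogComponent.isExp_dehomAlgHom W δ r (V.homogComponent_mem_gradedPiece _ H)
  have hspan : Ideal.span T ≤ I.comap (dehomAlgHom W V) := Ideal.span_le.mpr hTI
  exact ⟨_, hspan (V.homogComponent_mem_span hT hH _), hexp.ne_zero W, hexp⟩

theorem expSet_subset_projExpSet {J : Ideal B}
    (hlift : ∀ Q ∈ I, ∃ H ∈ J, SetLike.IsHomogeneousElem V.gradedPiece H ∧
      dehomAlgHom W V H = Q) :
    expSet W (rdelta W δ r) I ⊆ projExpSet V (rT W δ r) J := by
  rintro e ⟨Q, hQ, hQ0, he⟩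
  obtain ⟨H, hHJ, ⟨d, hd⟩, rfl⟩ := hlift Q hQ
  exact ⟨_, rfl, H, hHJ, fun h => hQ0 (by rw [h, map_zero]),
    he.isExpH_of_dehomAlgHom W δ r hd⟩

theorem projExpSet_span_eq_expSet {T : Set B}
    (hT : ∀ s ∈ T, SetLike.IsHomogeneousElem V.gradedPiece s)
    (hTI : ∀ s ∈ T, dehomAlgHom W V s ∈ I)
    (hlift : ∀ Q ∈ I, ∃ H ∈ Ideal.span T, SetLike.IsHomogeneousElem V.gradedPiece H ∧
      dehomAlgHom W V H = Q) :
    projExpSet V (rT W δ r) (Ideal.span T) = expSet W (rdelta W δ r) I :=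
  (projExpSet_span_subset W V δ r hT hTI).antisymm (expSet_subset_projExpSet W V δ r hlift)

end ExpSets

theorem exp_homogenized_ideal_general (K : Type*) [Field K] (n : ℕ) (A B : Type*) [Ring A]
    [Algebra K A] [Ring B] [Algebra K B] (W : WeylData K n A) (V : HWeylData K n B)
    (δ : A → WithBot ℤ)
    (r : WMon n → WMon n → Prop)
    (m : ℕ) (P : Fin m → A) (I : Ideal A) (hI : I = Ideal.span (Set.range P)) :
    {v : WMon n | ∃ E : HMon n, v = E.2 ∧
        ∃ H ∈ Ideal.span (Set.range fun i => homog W V (P i)), H ≠ 0 ∧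
          IsExpH V (rT W δ r) H E} =
      {v : WMon n | ∃ Q ∈ I, Q ≠ 0 ∧ IsExp W (rdelta W δ r) Q v} ∧
    {v : WMon n | ∃ E : HMon n, v = E.2 ∧
        ∃ H ∈ Ideal.span {H : B | ∃ Q ∈ I, H = homog W V Q}, H ≠ 0 ∧
          IsExpH V (rT W δ r) H E} =
      {v : WMon n | ∃ Q ∈ I, Q ≠ 0 ∧ IsExp W (rdelta W δ r) Q v} := by
  have homog_homogeneous (Q : A) : SetLike.IsHomogeneousElem V.gradedPiece (homog W V Q) :=
    ⟨_, homog_mem_gradedPiece W V Q⟩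
  subst hI
  refine ⟨projExpSet_span_eq_expSet W V δ r ?_ ?_ ?_, projExpSet_span_eq_expSet W V δ r ?_ ?_ ?_⟩
  · rintro _ ⟨i, rfl⟩
    exact homog_homogeneous _
  · rintro _ ⟨i, rfl⟩
    rw [dehomAlgHom_homog]
    exact Ideal.subset_span ⟨i, rfl⟩
  · exact fun _ => exists_homogeneous_lift W V P
  · rintro _ ⟨Q, -, rfl⟩
    exact homog_homogeneous Q
  · rintro _ ⟨Q, hQ, rfl⟩
    rwa [dehomAlgHom_homog]
  · exact fun Q hQ => ⟨_, Ideal.subset_span ⟨Q, hQ, rfl⟩, homog_homogeneous Q,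
      dehomAlgHom_homog W V Q⟩

/-- if `I` is the nonzero left ideal of `A_n(K)` generated by `P₁,…,P_m`,
`Ĩ` the left ideal of `A_n[t]` generated by `h(P₁),…,h(P_m)`, and `h(I)` the left ideal
generated by all `h(P)`, `P ∈ I`, then `π(Exp_δ(Ĩ)) = Exp_δ(I) = π(Exp_δ(h(I)))`. -/
theorem exp_homogenized_ideal (K : Type*) [Field K] (n : ℕ) (A B : Type*) [Ring A]
    [Algebra K A] [Ring B] [Algebra K B] (W : WeylData K n A) (V : HWeylData K n B)
    (δ : A → WithBot ℤ) (hδ : IsAdmissible W δ)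
    (r : WMon n → WMon n → Prop) (hr : WellMonomialOrdering r)
    (m : ℕ) (P : Fin m → A) (I : Ideal A) (hI : I = Ideal.span (Set.range P))
    (hIne : I ≠ ⊥) :
    {v : WMon n | ∃ E : HMon n, v = E.2 ∧
        ∃ H ∈ Ideal.span (Set.range fun i => homog W V (P i)), H ≠ 0 ∧
          IsExpH V (rT W δ r) H E} =
      {v : WMon n | ∃ Q ∈ I, Q ≠ 0 ∧ IsExp W (rdelta W δ r) Q v} ∧
    {v : WMon n | ∃ E : HMon n, v = E.2 ∧
        ∃ H ∈ Ideal.span {H : B | ∃ Q ∈ I, H = homog W V Q}, H ≠ 0 ∧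
          IsExpH V (rT W δ r) H E} =
      {v : WMon n | ∃ Q ∈ I, Q ≠ 0 ∧ IsExp W (rdelta W δ r) Q v} :=
  exp_homogenized_ideal_general K n A B W V δ r m P I hI
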